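/- arXiv:1210.0101 — 2 statements merged into one kernel-verified Lean document; each statement's English description precedes it below -/
import Mathlib

section
/- Let d ≥ 2 and let γ, δ : ℝ → (Fin d → ℝ) be differentiable curves that are well-parametrized and timelike, i.e., for every t ∈ ℝ the derivative vector u = γ′(t) satisfies (u 0)² − ((u 1)² + … + (u (d−1))²) = 1, and likewise for δ′(t). If the range of γ equals the range of δ, then there exist ε ∈ {−1, 1} and c ∈ ℝ such that δ(t) = γ(ε·t + c) for all t ∈ ℝ. -/
/-!
The time coordinate of a well-parametrized timelike curve has derivative of absolute value at
least `1`, so by Darboux's theorem it is strictly monotone, onto `ℝ`, with a differentiable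
inverse. Hence `γ` is injective and `δ = γ ∘ σ` for a differentiable `σ`. The chain rule gives
`δ' = σ' • γ' ∘ σ`, and comparing squared Minkowski lengths yields `σ'² = 1`; Darboux again
makes `σ'` a constant `±1`, so `σ t = ε t + c`.
-/

open Finset Filter Function

theorem deriv_forall_lt_or_forall_gt_of_forall_ne {f : ℝ → ℝ} (hf : Differentiable ℝ f) {m : ℝ}
    (hm : ∀ x, deriv f x ≠ m) : (∀ x, deriv f x < m) ∨ ∀ x, m < deriv f x := by
  simpa using hasDerivWithinAt_forall_lt_or_forall_gt_of_forall_ne convex_univ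
    (fun x _ => (hf x).hasDerivAt.hasDerivWithinAt) (fun x _ => hm x)

theorem surjective_of_one_le_deriv {f : ℝ → ℝ} (hf : Differentiable ℝ f)
    (hf' : ∀ x, 1 ≤ deriv f x) : Surjective f := by
  have hmono : Monotone fun x => f x - x := monotone_of_deriv_nonneg (hf.sub differentiable_id)
    fun x => by rw [((hf x).hasDerivAt.fun_sub (hasDerivAt_id' x)).deriv]; linarith [hf' x]
  refine hf.continuous.surjective ?_ ?_
  · refine tendsto_atTop_mono' _ ((eventually_ge_atTop 0).mono fun x hx => ?_)
      (tendsto_atTop_add_const_right _ (f 0) tendsto_id)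
    have := hmono hx
    dsimp at this ⊢
    linarith
  · refine tendsto_atBot_mono' _ ((eventually_le_atBot 0).mono fun x hx => ?_)
      (tendsto_atBot_add_const_right _ (f 0) tendsto_id)
    have := hmono hx
    dsimp at this ⊢
    linarith

theorem exists_differentiable_leftInverse_of_one_le_deriv {f : ℝ → ℝ} (hf : Differentiable ℝ f)
    (hf' : ∀ x, 1 ≤ deriv f x) :
    ∃ g : ℝ → ℝ, Differentiable ℝ g ∧ LeftInverse g f := by
  have hpos : ∀ x, 0 < deriv f x := fun x => by linarith [hf' x]
  let e : ℝ ≃o ℝ := (strictMono_of_deriv_pos hpos).orderIsoOfSurjective f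
    (surjective_of_one_le_deriv hf hf')
  refine ⟨e.symm, fun y => ?_, e.left_inv⟩
  exact (HasDerivAt.of_local_left_inverse e.symm.continuous.continuousAt
    (hf _).hasDerivAt (hpos _).ne' (Eventually.of_forall e.right_inv)).differentiableAt

theorem exists_differentiable_leftInverse_of_one_le_abs_deriv {f : ℝ → ℝ}
    (hf : Differentiable ℝ f) (hf' : ∀ x, 1 ≤ |deriv f x|) :
    ∃ g : ℝ → ℝ, Differentiable ℝ g ∧ LeftInverse g f := by
  have hne : ∀ x, deriv f x ≠ 0 := fun x h => (by norm_num [h] : ¬1 ≤ |deriv f x|) (hf' x)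
  rcases deriv_forall_lt_or_forall_gt_of_forall_ne hf hne with hneg | hpos
  · obtain ⟨g, hg, hgf⟩ := exists_differentiable_leftInverse_of_one_le_deriv hf.neg fun x => by
      rw [deriv.neg]
      linarith [abs_of_neg (hneg x), hf' x]
    exact ⟨fun y => g (-y), hg.comp differentiable_neg, hgf⟩
  · exact exists_differentiable_leftInverse_of_one_le_deriv hf fun x => by
      simpa [abs_of_pos (hpos x)] using hf' x

theorem exists_eq_mul_add_of_sq_deriv_eq_one {σ : ℝ → ℝ} (hσ : Differentiable ℝ σ)
    (hσ' : ∀ t, deriv σ t ^ 2 = 1) :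
    ∃ ε : ℝ, (ε = -1 ∨ ε = 1) ∧ ∃ c : ℝ, ∀ t, σ t = ε * t + c := by
  have hne : ∀ t, deriv σ t ≠ 0 := fun t h => by simpa [h] using hσ' t
  obtain ⟨ε, hε, hderiv⟩ : ∃ ε : ℝ, (ε = -1 ∨ ε = 1) ∧ ∀ t, deriv σ t = ε := by
    rcases deriv_forall_lt_or_forall_gt_of_forall_ne hσ hne with hneg | hpos
    · exact ⟨-1, Or.inl rfl, fun t => by nlinarith [hσ' t, hneg t]⟩
    · exact ⟨1, Or.inr rfl, fun t => by nlinarith [hσ' t, hpos t]⟩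
  have hlin : ∀ t, HasDerivAt (fun t => σ t - ε * t) 0 t := fun t => by
    simpa [hderiv] using (hσ t).hasDerivAt.fun_sub ((hasDerivAt_id' t).const_mul ε)
  have hconst := is_const_of_deriv_eq_zero (fun t => (hlin t).differentiableAt)
    fun t => (hlin t).deriv
  exact ⟨ε, hε, σ 0, fun t => by linarith [hconst t 0]⟩

section Minkowski

variable {ι : Type*} [Fintype ι] [DecidableEq ι]

def minkowskiSq (i₀ : ι) (u : ι → ℝ) : ℝ :=
  u i₀ ^ 2 - ∑ i ∈ univ.erase i₀, u i ^ 2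

theorem minkowskiSq_smul (i₀ : ι) (a : ℝ) (u : ι → ℝ) :
    minkowskiSq i₀ (a • u) = a ^ 2 * minkowskiSq i₀ u := by
  simp only [minkowskiSq, Pi.smul_apply, smul_eq_mul, mul_pow, ← mul_sum]
  ring

theorem one_le_abs_of_minkowskiSq_eq_one {i₀ : ι} {u : ι → ℝ} (h : minkowskiSq i₀ u = 1) :
    1 ≤ |u i₀| := by
  have : 0 ≤ ∑ i ∈ univ.erase i₀, u i ^ 2 := sum_nonneg fun i _ => sq_nonneg _
  rw [minkowskiSq] at h
  exact (one_le_sq_iff_one_le_abs _).mp (by linarith)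

end Minkowski

theorem exists_differentiable_comp_eq_of_range_subset {ι : Type*} [Fintype ι]
    {γ δ : ℝ → ι → ℝ} (hγ : Differentiable ℝ γ) (hδ : Differentiable ℝ δ) {i₀ : ι}
    (hγ₀ : ∀ t, 1 ≤ |deriv γ t i₀|) (hran : Set.range δ ⊆ Set.range γ) :
    ∃ σ : ℝ → ℝ, Differentiable ℝ σ ∧ γ ∘ σ = δ := by
  have hcoord : ∀ (φ : ℝ → ι → ℝ), Differentiable ℝ φ → ∀ t,
      HasDerivAt (fun t => φ t i₀) (deriv φ t i₀) t :=
    fun φ hφ t => hasDerivAt_pi.mp (hφ t).hasDerivAt i₀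
  obtain ⟨g, hg, hgγ⟩ := exists_differentiable_leftInverse_of_one_le_abs_deriv
    (fun t => (hcoord γ hγ t).differentiableAt) fun t => (hcoord γ hγ t).deriv ▸ hγ₀ t
  refine ⟨fun t => g (δ t i₀), hg.comp fun t => (hcoord δ hδ t).differentiableAt,
    funext fun t => ?_⟩
  obtain ⟨s, hs⟩ := hran (Set.mem_range_self t)
  simp only [comp_apply, ← hs, hgγ s]

open Finset in
/-- Two well-parametrized timelike curves in `ℝ^d` (`d ≥ 2`) with the
same range are reparametrizations of each other by `t ↦ ε t + c` with `ε = ±1`. -/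
theorem wellParametrized_timelike_same_range (d : ℕ) (hd : 2 ≤ d)
    (γ δ : ℝ → (Fin d → ℝ)) (hγ : Differentiable ℝ γ) (hδ : Differentiable ℝ δ)
    (hγwp : ∀ t : ℝ, (deriv γ t ⟨0, by omega⟩) ^ 2 -
      ∑ i ∈ Finset.univ.erase (⟨0, by omega⟩ : Fin d), (deriv γ t i) ^ 2 = 1)
    (hδwp : ∀ t : ℝ, (deriv δ t ⟨0, by omega⟩) ^ 2 -
      ∑ i ∈ Finset.univ.erase (⟨0, by omega⟩ : Fin d), (deriv δ t i) ^ 2 = 1)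
    (hran : Set.range γ = Set.range δ) :
    ∃ ε : ℝ, (ε = -1 ∨ ε = 1) ∧ ∃ c : ℝ, ∀ t : ℝ, δ t = γ (ε * t + c) := by
  let i₀ : Fin d := ⟨0, by omega⟩
  have hγ' : ∀ t, minkowskiSq i₀ (deriv γ t) = 1 := hγwp
  have hδ' : ∀ t, minkowskiSq i₀ (deriv δ t) = 1 := hδwp
  obtain ⟨σ, hσ, hγσ⟩ := exists_differentiable_comp_eq_of_range_subset hγ hδ
    (fun t => one_le_abs_of_minkowskiSq_eq_one (hγ' t)) hran.ge
  have hchain : ∀ t, deriv δ t = deriv σ t • deriv γ (σ t) := fun t => by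
    rw [← hγσ]
    exact ((hγ (σ t)).hasDerivAt.scomp t (hσ t).hasDerivAt).deriv
  have hσ' : ∀ t, deriv σ t ^ 2 = 1 := fun t => by
    simpa only [hchain, minkowskiSq_smul, hγ', mul_one] using hδ' t
  obtain ⟨ε, hε, c, hσ_eq⟩ := exists_eq_mul_add_of_sq_deriv_eq_one hσ hσ'
  exact ⟨ε, hε, c, fun t => by rw [← hγσ, comp_apply, hσ_eq]⟩
end

section
/- Let S, C : ℝ → ℝ be differentiable functions such that for all t ∈ ℝ: C(t)² − S(t)² = 1 and (S′(t))² − (C′(t))² = 1, with S(0) = 0, C(0) = 1, and S strictly increasing. Then S′(t) = C(t) and C′(t) = S(t) for all t ∈ ℝ. -/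
/-!
Differentiating `C² - S² = 1` gives `C C' = S S'`. Multiplying `S'² - C'² = 1` by `C²` and
substituting turns it into `S'² (C² - S²) = C²`, i.e. `S'² = C²`. Since `C` never vanishes and
`C 0 = 1`, `C > 0` everywhere, while `S' ≥ 0` by monotonicity; hence `S' = C`, and then
`C C' = S C` gives `C' = S`.
-/

lemma mul_deriv_eq_mul_deriv_of_sq_sub_sq_eq {S C : ℝ → ℝ} {c t : ℝ}
    (hS : DifferentiableAt ℝ S t) (hC : DifferentiableAt ℝ C t)
    (h : ∀ t, C t ^ 2 - S t ^ 2 = c) :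
    C t * deriv C t = S t * deriv S t := by
  have hconst : deriv (fun t => C t ^ 2 - S t ^ 2) t = 0 := by
    simp only [h, deriv_const]
  rw [deriv_fun_sub (hC.fun_pow 2) (hS.fun_pow 2), deriv_fun_pow hC, deriv_fun_pow hS] at hconst
  linear_combination hconst / 2

lemma eq_and_eq_of_sq_sub_sq_eq_one {s c s' c' : ℝ} (h : c ^ 2 - s ^ 2 = 1)
    (h' : s' ^ 2 - c' ^ 2 = 1) (hmul : c * c' = s * s') (hc : 0 < c) (hs' : 0 ≤ s') :
    s' = c ∧ c' = s := by
  have hsq : s' ^ 2 = c ^ 2 := by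
    linear_combination (c' * c + s * s') * hmul + c ^ 2 * h' - s' ^ 2 * h
  have hs'c : s' = c := (sq_eq_sq₀ hs' hc.le).1 hsq
  refine ⟨hs'c, mul_left_cancel₀ hc.ne' ?_⟩
  rw [hmul, hs'c, mul_comm]

theorem deriv_of_hyperbolic_pair_general (S C : ℝ → ℝ)
    (hS : Differentiable ℝ S) (hC : Differentiable ℝ C)
    (hsq : ∀ t : ℝ, C t ^ 2 - S t ^ 2 = 1)
    (hwp : ∀ t : ℝ, (deriv S t) ^ 2 - (deriv C t) ^ 2 = 1)
    (hC0 : C 0 = 1) (hmono : StrictMono S) :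
    ∀ t : ℝ, deriv S t = C t ∧ deriv C t = S t := by
  have hC_ne : ∀ t, C t ≠ 0 := fun t h0 => by nlinarith [hsq t, sq_nonneg (S t)]
  have hC_pos : ∀ t, 0 < C t := fun t =>
    isPreconnected_univ.lt_of_ne hC.continuous.continuousOn (fun t _ => hC_ne t)
      ⟨0, trivial, by rw [hC0]; exact one_pos⟩ trivial
  intro t
  exact eq_and_eq_of_sq_sub_sq_eq_one (hsq t) (hwp t)
    (mul_deriv_eq_mul_deriv_of_sq_sub_sq_eq (hS t) (hC t) hsq) (hC_pos t)
    hmono.monotone.deriv_nonneg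

/-- If `C² − S² = 1`, `(S')² − (C')² = 1`, `S 0 = 0`, `C 0 = 1`
and `S` is strictly increasing, then `S' = C` and `C' = S`. -/
theorem deriv_of_hyperbolic_pair (S C : ℝ → ℝ)
    (hS : Differentiable ℝ S) (hC : Differentiable ℝ C)
    (hsq : ∀ t : ℝ, C t ^ 2 - S t ^ 2 = 1)
    (hwp : ∀ t : ℝ, (deriv S t) ^ 2 - (deriv C t) ^ 2 = 1)
    (hS0 : S 0 = 0) (hC0 : C 0 = 1) (hmono : StrictMono S) :
    ∀ t : ℝ, deriv S t = C t ∧ deriv C t = S t :=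
  deriv_of_hyperbolic_pair_general S C hS hC hsq hwp hC0 hmono
end
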